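/- Let M be a compact metric space, Y a Banach space, and f : M → Y a Lipschitz map with ‖f‖_L = 1. Assume there exist x ≠ y in M with ‖f(x)−f(y)‖ = d(x,y) and metric segment [x,y] = {x,y}. Then for every ε > 0 there exists a non-local Lipschitz map φ : M → Y with ‖f−φ‖_L ≤ ε. -/

import Mathlib

/-- The least Lipschitz constant of a map between a metric space and a normed space,
defined as the supremum of the difference quotients. -/
noncomputable def lipNorm {M : Type*} [MetricSpace M] {Y : Type*} [NormedAddCommGroup Y]
    (f : M → Y) : ℝ :=
  sSup {r : ℝ | ∃ x y : M, x ≠ y ∧ r = ‖f x - f y‖ / dist x y}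

/-- `f` is a Lipschitz map. -/
def IsLip {M : Type*} [MetricSpace M] {Y : Type*} [NormedAddCommGroup Y] (f : M → Y) : Prop :=
  ∃ K : NNReal, LipschitzWith K f

/-- `f` is a local map: it approximates its Lipschitz norm at arbitrarily close pairs. -/
def IsLocalMap {M : Type*} [MetricSpace M] {Y : Type*} [NormedAddCommGroup Y]
    (f : M → Y) : Prop :=
  ∀ ε > (0 : ℝ), ∃ x y : M, x ≠ y ∧ dist x y < ε ∧
    ‖f x - f y‖ > (lipNorm f - ε) * dist x y


/-!
Compactness and `[x,y] = {x,y}` give a uniform detour `η > 0`: with `d = d(x,y)`, every `z` with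
`d/4 ≤ d(x,z) ≤ 3d/4` has `d(x,z) + d(z,y) ≥ d + η`. The gauge equal to `d(x,·)` on `B(x, d/4)`
and to `max (d(x,·)) (d + η - d(·,y))` off it rises by `d + η` from `x` to `y`, yet it is
`1`-Lipschitz at scales `≤ d/2`: such a step out of the ball lands in the annulus, where the two
formulas agree. Rescaled by `d/(d+η)` it rises by `d` but is `d/(d+η)`-Lipschitz at short range.
Perturbing `f` by `s` times it in the direction of `f x - f y` raises the quotient at `(x,y)` to
`1 + s`, while short-range quotients stay below `1 + s d/(d+η)`.
-/

section LipNorm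

variable {M : Type*} [MetricSpace M] {Y : Type*} [NormedAddCommGroup Y] {f : M → Y} {K : ℝ}

theorem isLip_of_norm_sub_le (h : ∀ p q, ‖f p - f q‖ ≤ K * dist p q) : IsLip f :=
  ⟨K.toNNReal, LipschitzWith.of_dist_le_mul fun p q => by
    rw [dist_eq_norm]
    exact (h p q).trans (mul_le_mul_of_nonneg_right K.le_coe_toNNReal dist_nonneg)⟩

theorem div_le_lipNorm (h : ∀ p q, ‖f p - f q‖ ≤ K * dist p q) {p q : M} (hpq : p ≠ q) :
    ‖f p - f q‖ / dist p q ≤ lipNorm f := by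
  refine le_csSup ⟨K, ?_⟩ ⟨p, q, hpq, rfl⟩
  rintro r ⟨a, b, hab, rfl⟩
  exact (div_le_iff₀ (dist_pos.2 hab)).2 (h a b)

theorem lipNorm_le (hK : 0 ≤ K) (h : ∀ p q, ‖f p - f q‖ ≤ K * dist p q) : lipNorm f ≤ K := by
  refine Real.sSup_le ?_ hK
  rintro r ⟨p, q, hpq, rfl⟩
  exact (div_le_iff₀ (dist_pos.2 hpq)).2 (h p q)

theorem IsLip.norm_sub_le (hf : IsLip f) (p q : M) : ‖f p - f q‖ ≤ lipNorm f * dist p q := by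
  obtain ⟨K, hK⟩ := hf
  rcases eq_or_ne p q with rfl | hpq
  · simp
  · have h : ∀ a b, ‖f a - f b‖ ≤ K * dist a b := fun a b => by
      rw [← dist_eq_norm]
      exact hK.dist_le_mul a b
    exact (div_le_iff₀ (dist_pos.2 hpq)).1 (div_le_lipNorm h hpq)

theorem not_isLocalMap_of_norm_sub_le {δ θ : ℝ} (hδ : 0 < δ) (hθ : 0 < θ)
    (h : ∀ p q, dist p q < δ → ‖f p - f q‖ ≤ (lipNorm f - θ) * dist p q) : ¬ IsLocalMap f := by
  intro hloc
  obtain ⟨p, q, -, hpq, hgt⟩ := hloc (min δ θ) (lt_min hδ hθ)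
  have hle : (lipNorm f - θ) * dist p q ≤ (lipNorm f - min δ θ) * dist p q :=
    mul_le_mul_of_nonneg_right (by linarith [min_le_right δ θ]) dist_nonneg
  linarith [h p q (hpq.trans_le (min_le_left δ θ))]

end LipNorm

section Perturbation

variable {M : Type*} [MetricSpace M] {Y : Type*} [NormedAddCommGroup Y] [NormedSpace ℝ Y]

theorem exists_not_isLocalMap_lipNorm_sub_le {f : M → Y} {x y : M}
    (hf : ∀ p q, ‖f p - f q‖ ≤ dist p q) (hxy : x ≠ y) (hatt : ‖f x - f y‖ = dist x y)
    {k : M → ℝ} {L δ c s : ℝ} (hk : k y - k x = dist x y)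
    (hkL : ∀ p q, |k p - k q| ≤ L * dist p q) (hδ : 0 < δ) (hc : c < 1)
    (hkloc : ∀ p q, dist p q < δ → |k p - k q| ≤ c * dist p q) (hs : 0 < s) :
    ∃ φ : M → Y, IsLip φ ∧ ¬ IsLocalMap φ ∧ lipNorm (fun p => f p - φ p) ≤ s * L := by
  set d := dist x y
  have hd : 0 < d := dist_pos.2 hxy
  have hL : 1 ≤ L := by
    have h := hkL y x
    rw [hk, abs_of_pos hd, dist_comm] at h
    exact (le_mul_iff_one_le_left hd).1 h
  set u : Y := d⁻¹ • (f x - f y)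
  have hu : ‖u‖ = 1 := by
    rw [norm_smul, hatt, norm_inv, Real.norm_of_nonneg hd.le, inv_mul_cancel₀ hd.ne']
  set φ : M → Y := fun p => f p - (s * k p) • u
  have hsub : ∀ p q, ‖(f p - φ p) - (f q - φ q)‖ = s * |k p - k q| := by
    intro p q
    simp only [φ, sub_sub_cancel, ← sub_smul, ← mul_sub, norm_smul, hu, Real.norm_eq_abs,
      abs_mul, abs_of_pos hs, mul_one]
  have hφ : ∀ p q, ‖φ p - φ q‖ ≤ dist p q + s * |k p - k q| := by
    intro p q
    calc ‖φ p - φ q‖ = ‖(f p - f q) - ((f p - φ p) - (f q - φ q))‖ := by congr 1; abel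
      _ ≤ dist p q + s * |k p - k q| := (norm_sub_le _ _).trans (by rw [hsub]; linarith [hf p q])
  have hφL : ∀ p q, ‖φ p - φ q‖ ≤ (1 + s * L) * dist p q := fun p q => by
    nlinarith [hφ p q, hkL p q]
  have hφxy : φ x - φ y = (1 + s) • (f x - f y) :=
    calc φ x - φ y = (f x - f y) + (s * (k y - k x)) • u := by
          simp only [φ, mul_sub, sub_smul]; abel
      _ = (1 + s) • (f x - f y) := by
          rw [hk, smul_smul, mul_assoc, mul_inv_cancel₀ hd.ne', mul_one, add_smul, one_smul,
            add_comm]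
  have hlip : 1 + s ≤ lipNorm φ := by
    have h := div_le_lipNorm hφL hxy
    rwa [hφxy, norm_smul, hatt, Real.norm_of_nonneg (by linarith), mul_div_assoc,
      div_self hd.ne', mul_one] at h
  refine ⟨φ, isLip_of_norm_sub_le hφL, ?_, lipNorm_le (by positivity) ?_⟩
  · refine not_isLocalMap_of_norm_sub_le hδ (θ := s * (1 - c)) (by nlinarith) fun p q hpq => ?_
    have h := hkloc p q hpq
    nlinarith [hφ p q, dist_nonneg (x := p) (y := q)]
  · intro p q
    rw [hsub, mul_assoc]
    exact mul_le_mul_of_nonneg_left (hkL p q) hs.le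

end Perturbation

section Detour

variable {M : Type*} [PseudoMetricSpace M]

theorem exists_pos_add_le_dist_add_dist [CompactSpace M] {x y : M}
    (hseg : {z : M | dist x z + dist z y = dist x y} = {x, y}) {r R : ℝ} (hr : 0 < r)
    (hR : R < dist x y) :
    ∃ η > 0, ∀ z, r ≤ dist x z → dist x z ≤ R → dist x y + η ≤ dist x z + dist z y := by
  have hA : IsCompact {z | dist x z ∈ Set.Icc r R} :=
    (isClosed_Icc.preimage (continuous_const.dist continuous_id)).isCompact
  have hpos : ∀ z ∈ {z | dist x z ∈ Set.Icc r R}, 0 < dist x z + dist z y - dist x y := by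
    rintro z ⟨h1, h2⟩
    have hz : z ∉ ({x, y} : Set M) := by
      rintro (rfl | rfl)
      · simp at h1; linarith
      · linarith
    rw [← hseg] at hz
    exact sub_pos.2 ((dist_triangle x z y).lt_of_ne' hz)
  obtain ⟨η, hη, hmin⟩ := hA.exists_forall_le' (by fun_prop) hpos
  exact ⟨η, hη, fun z h1 h2 => by linarith [hmin z ⟨h1, h2⟩]⟩

end Detour

section DetourGauge

variable {M : Type*} [PseudoMetricSpace M] (x y : M) (r η : ℝ)

noncomputable def detourGauge (p : M) : ℝ :=
  if dist x p < r then dist x p else max (dist x p) (dist x y + η - dist p y)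

variable {x y r η}

theorem detourGauge_self (hr : 0 < r) : detourGauge x y r η x = 0 := by
  simp [detourGauge, hr]

theorem detourGauge_right (hr : r ≤ dist x y) (hη : 0 ≤ η) :
    detourGauge x y r η y = dist x y + η := by
  simp [detourGauge, hr.not_gt, hη]

theorem detourGauge_sub_le (hη : 0 ≤ η) (p q : M) :
    detourGauge x y r η q - detourGauge x y r η p ≤ dist p q + η := by
  have := dist_triangle x p q
  have := dist_triangle x q y
  have := dist_triangle q p y
  have := le_max_left (dist x p) (dist x y + η - dist p y)
  have := le_max_right (dist x p) (dist x y + η - dist p y)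
  unfold detourGauge
  split_ifs <;> first | linarith | (rw [sub_le_iff_le_add, max_le_iff]; constructor <;> linarith)

theorem abs_detourGauge_sub_le (hη : 0 ≤ η) (p q : M) :
    |detourGauge x y r η p - detourGauge x y r η q| ≤ dist p q + η := by
  rw [abs_sub_le_iff]
  exact ⟨dist_comm p q ▸ detourGauge_sub_le hη q p, detourGauge_sub_le hη p q⟩

theorem detourGauge_eq_dist {R : ℝ}
    (hann : ∀ z, r ≤ dist x z → dist x z ≤ R → dist x y + η ≤ dist x z + dist z y) {p : M}
    (hp : dist x p ≤ R) : detourGauge x y r η p = dist x p := by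
  unfold detourGauge
  split_ifs with h
  · rfl
  · exact max_eq_left (by linarith [hann p (not_lt.1 h) hp])

theorem abs_detourGauge_sub_le_of_le {p q : M} (hp : r ≤ dist x p) (hq : r ≤ dist x q) :
    |detourGauge x y r η p - detourGauge x y r η q| ≤ dist p q := by
  simp only [detourGauge, not_lt.2 hp, not_lt.2 hq, if_false]
  refine (abs_max_sub_max_le_max _ _ _ _).trans (max_le ?_ ?_)
  · rw [dist_comm x p, dist_comm x q]
    exact abs_dist_sub_le p q x
  · rw [sub_sub_sub_cancel_left, abs_sub_comm]
    exact abs_dist_sub_le p q y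

theorem abs_detourGauge_sub_le_of_dist_le {R : ℝ}
    (hann : ∀ z, r ≤ dist x z → dist x z ≤ R → dist x y + η ≤ dist x z + dist z y) {p q : M}
    (hpq : dist p q ≤ R - r) :
    |detourGauge x y r η p - detourGauge x y r η q| ≤ dist p q := by
  by_cases h : r ≤ dist x p ∧ r ≤ dist x q
  · exact abs_detourGauge_sub_le_of_le h.1 h.2
  · have hpR : dist x p ≤ R ∧ dist x q ≤ R := by
      have := dist_triangle x p q
      have := dist_triangle x q p
      rw [dist_comm q p] at this
      rcases not_and_or.1 h with hp | hq
      · constructor <;> linarith [not_le.1 hp]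
      · constructor <;> linarith [not_le.1 hq]
    rw [detourGauge_eq_dist hann hpR.1, detourGauge_eq_dist hann hpR.2, dist_comm x p,
      dist_comm x q]
    exact abs_dist_sub_le p q x

end DetourGauge

theorem exists_locally_contracting_of_segment {M : Type*} [MetricSpace M] [CompactSpace M]
    {x y : M} (hxy : x ≠ y) (hseg : {z : M | dist x z + dist z y = dist x y} = {x, y}) :
    ∃ k : M → ℝ, k y - k x = dist x y ∧ (∀ p q, |k p - k q| ≤ 2 * dist p q) ∧
      ∃ c < 1, ∀ p q, dist p q < dist x y / 2 → |k p - k q| ≤ c * dist p q := by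
  set d := dist x y
  have hd : 0 < d := dist_pos.2 hxy
  obtain ⟨η, hη, hann⟩ := exists_pos_add_le_dist_add_dist hseg (r := d / 4) (R := 3 * d / 4)
    (by positivity) (by linarith)
  obtain ⟨g, hgx, hgy, hg, hgloc⟩ : ∃ g : M → ℝ, g x = 0 ∧ g y = d + η ∧
      (∀ p q, |g p - g q| ≤ dist p q + η) ∧ ∀ p q, dist p q ≤ d / 2 → |g p - g q| ≤ dist p q :=
    ⟨detourGauge x y (d / 4) η, detourGauge_self (by positivity),
      detourGauge_right (by linarith) hη.le, abs_detourGauge_sub_le hη.le,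
      fun p q h => abs_detourGauge_sub_le_of_dist_le hann (by linarith)⟩
  set c := d / (d + η)
  have hc : 0 < c := by positivity
  have hk : ∀ p q, |c * g p - c * g q| = c * |g p - g q| := fun p q => by
    rw [← mul_sub, abs_mul, abs_of_pos hc]
  refine ⟨fun p => c * g p, ?_, fun p q => ?_, c, (div_lt_one (by positivity)).2 (by linarith),
    fun p q h => ?_⟩
  · rw [← mul_sub, hgx, hgy, sub_zero, div_mul_cancel₀ d (by positivity : d + η ≠ 0)]
  · rw [hk]
    rcases le_or_gt (dist p q) (d / 2) with h | h
    · have hc1 : c ≤ 1 := (div_le_one (by positivity)).2 (by linarith)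
      nlinarith [hgloc p q h, abs_nonneg (g p - g q)]
    · rw [div_mul_eq_mul_div, div_le_iff₀ (by positivity)]
      nlinarith [hg p q]
  · rw [hk]
    exact mul_le_mul_of_nonneg_left (hgloc p q h.le) hc.le

theorem stmt_8_general {M : Type*} [MetricSpace M] [CompactSpace M]
    {Y : Type*} [NormedAddCommGroup Y] [NormedSpace ℝ Y]
    (f : M → Y) (hf : IsLip f) (hnorm : lipNorm f = 1)
    (x y : M) (hxy : x ≠ y) (hatt : ‖f x - f y‖ = dist x y)
    (hseg : {z : M | dist x z + dist z y = dist x y} = {x, y})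
    (ε : ℝ) (hε : 0 < ε) :
    ∃ φ : M → Y, IsLip φ ∧ ¬ IsLocalMap φ ∧ lipNorm (fun p => f p - φ p) ≤ ε := by
  have hf1 : ∀ p q, ‖f p - f q‖ ≤ dist p q := fun p q => by
    simpa [hnorm] using hf.norm_sub_le p q
  obtain ⟨k, hk, hkL, c, hc, hkloc⟩ := exists_locally_contracting_of_segment hxy hseg
  obtain ⟨φ, hφ, hnloc, hdist⟩ := exists_not_isLocalMap_lipNorm_sub_le hf1 hxy hatt hk hkL
    (half_pos (dist_pos.2 hxy)) hc hkloc (half_pos hε)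
  exact ⟨φ, hφ, hnloc, by linarith⟩

/-- Let `M` be compact, `Y` Banach, `f : M → Y` Lipschitz with `‖f‖_L = 1` attaining its norm
at a pair `x ≠ y` with trivial metric segment `[x,y] = {x,y}`. Then `f` can be approximated
arbitrarily well (in Lipschitz distance) by non-local Lipschitz maps. -/
theorem stmt_8 {M : Type*} [MetricSpace M] [CompactSpace M]
    {Y : Type*} [NormedAddCommGroup Y] [NormedSpace ℝ Y] [CompleteSpace Y]
    (f : M → Y) (hf : IsLip f) (hnorm : lipNorm f = 1)
    (x y : M) (hxy : x ≠ y) (hatt : ‖f x - f y‖ = dist x y)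
    (hseg : {z : M | dist x z + dist z y = dist x y} = {x, y})
    (ε : ℝ) (hε : 0 < ε) :
    ∃ φ : M → Y, IsLip φ ∧ ¬ IsLocalMap φ ∧ lipNorm (fun p => f p - φ p) ≤ ε :=
  stmt_8_general f hf hnorm x y hxy hatt hseg ε hε
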